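/- arXiv:1805.10610 — 3 statements merged into one kernel-verified Lean document; each statement's English description precedes it below -/
import Mathlib

section
/- Consider the Newton equation ∇_{q̇} q̇ = F(q̇,q) on a Riemannian manifold (M,g), where F = ⟨grad ln ν, q̇⟩ q̇ − 2⟨grad ln f, q̇⟩ q̇ + ⟨q̇,q̇⟩ grad ln f for nowhere-vanishing smooth functions f, ν on M (gradients and inner products with respect to g). Then after the time reparametrization dτ = ν(q) dt, solutions become geodesics of the conformal metric g* = f²g: ∇*_{q'} q' = 0, where q' = dq/dτ. -/
open scoped BigOperators

noncomputable def pd {n : ℕ} (i : Fin n) (φ : (Fin n → ℝ) → ℝ) (x : Fin n → ℝ) : ℝ :=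
  fderiv ℝ φ x (Pi.single i 1)

noncomputable def christoffel {n : ℕ} (g ginv : (Fin n → ℝ) → Matrix (Fin n) (Fin n) ℝ)
    (k i j : Fin n) (x : Fin n → ℝ) : ℝ :=
  (1 / 2) * ∑ l, ginv x k l *
    (pd i (fun y => g y l j) x + pd j (fun y => g y l i) x - pd l (fun y => g y i j) x)

/-- The inner product `⟨u,v⟩` of vectors at `x` with respect to the metric `g`. -/
noncomputable def ip {n : ℕ} (g : (Fin n → ℝ) → Matrix (Fin n) (Fin n) ℝ)
    (x u v : Fin n → ℝ) : ℝ :=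
  ∑ i, ∑ j, g x i j * u i * v j

/-- The force `F = ⟨grad ln ν, v⟩ v − 2⟨grad ln f, v⟩ v + ⟨v,v⟩ grad ln f` in coordinates. -/
noncomputable def chapForce {n : ℕ} (g ginv : (Fin n → ℝ) → Matrix (Fin n) (Fin n) ℝ)
    (f ν : (Fin n → ℝ) → ℝ) (x v : Fin n → ℝ) (k : Fin n) : ℝ :=
  (∑ i, (pd i ν x / ν x) * v i) * v k
    - 2 * (∑ i, (pd i f x / f x) * v i) * v k
    + ip g x v v * ∑ l, ginv x k l * (pd l f x / f x)


lemma pd_mul {n : ℕ} (i : Fin n) (φ ψ : (Fin n → ℝ) → ℝ) (x : Fin n → ℝ)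
    (hφ : DifferentiableAt ℝ φ x) (hψ : DifferentiableAt ℝ ψ x) :
    pd i (fun y => φ y * ψ y) x = φ x * pd i ψ x + ψ x * pd i φ x := by
  simp only [pd, fderiv_fun_mul hφ hψ]
  simp

lemma fderiv_apply_eq_sum {n : ℕ} (φ : (Fin n → ℝ) → ℝ) (x v : Fin n → ℝ) :
    fderiv ℝ φ x v = ∑ i, v i * pd i φ x := by
  have hv : v = ∑ i, v i • (Pi.single i (1:ℝ) : Fin n → ℝ) := by
    funext j
    simp [Finset.sum_apply, Pi.single_apply]
  conv_lhs => rw [hv]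
  rw [map_sum]
  simp [pd]

lemma christoffel_conformal {n : ℕ} (g ginv : (Fin n → ℝ) → Matrix (Fin n) (Fin n) ℝ)
    (f : (Fin n → ℝ) → ℝ)
    (hg : ∀ i j, ContDiff ℝ (⊤ : ℕ∞) fun x => g x i j)
    (hf : ContDiff ℝ (⊤ : ℕ∞) f) (hf0 : ∀ x, f x ≠ 0)
    (hinv : ∀ x, ginv x * g x = 1)
    (k i j : Fin n) (x : Fin n → ℝ) :
    christoffel (fun y => (f y) ^ 2 • g y) (fun y => ((f y) ^ 2)⁻¹ • ginv y) k i j x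
      = christoffel g ginv k i j x
        + (if k = j then pd i f x / f x else 0)
        + (if k = i then pd j f x / f x else 0)
        - g x i j * ∑ l, ginv x k l * (pd l f x / f x) := by
  have hfd : DifferentiableAt ℝ f x := hf.differentiable (by simp) x
  have hgd : ∀ a b, DifferentiableAt ℝ (fun y => g y a b) x :=
    fun a b => (hg a b).differentiable (by simp) x
  have hsq : ∀ a b (m : Fin n), pd m (fun y => (f y)^2 * g y a b) x
      = 2 * f x * pd m f x * g x a b + (f x)^2 * pd m (fun y => g y a b) x := by
    intro a b m
    have h1 : (fun y => (f y)^2 * g y a b) = fun y => (f y * f y) * g y a b := by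
      funext y; ring
    rw [h1, pd_mul m _ _ x (show DifferentiableAt ℝ (fun y => f y * f y) x from hfd.mul hfd) (hgd a b), pd_mul m f f x hfd hfd]
    ring
  have hdelta : ∀ b, ∑ l, ginv x k l * g x l b = if k = b then 1 else 0 := by
    intro b
    have := congrArg (fun M => M k b) (hinv x)
    simpa [Matrix.mul_apply, Matrix.one_apply] using this
  simp only [christoffel, Matrix.smul_apply, smul_eq_mul, hsq]
  have key : ∑ l, ((f x)^2)⁻¹ * ginv x k l *
      ((2 * f x * pd i f x * g x l j + (f x)^2 * pd i (fun y => g y l j) x)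
        + (2 * f x * pd j f x * g x l i + (f x)^2 * pd j (fun y => g y l i) x)
        - (2 * f x * pd l f x * g x i j + (f x)^2 * pd l (fun y => g y i j) x))
      = (∑ l, ginv x k l *
          (pd i (fun y => g y l j) x + pd j (fun y => g y l i) x - pd l (fun y => g y i j) x))
        + (2 * pd i f x / f x) * (∑ l, ginv x k l * g x l j)
        + (2 * pd j f x / f x) * (∑ l, ginv x k l * g x l i)
        - (2 * g x i j / f x) * (∑ l, ginv x k l * pd l f x) := by
    rw [Finset.mul_sum, Finset.mul_sum, Finset.mul_sum, ← Finset.sum_add_distrib,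
        ← Finset.sum_add_distrib, ← Finset.sum_sub_distrib]
    apply Finset.sum_congr rfl
    intro l _
    field_simp [hf0 x]
    ring
  rw [key, hdelta, hdelta]
  have hlast : ∑ l, ginv x k l * (pd l f x / f x) = (∑ l, ginv x k l * pd l f x) / f x := by
    rw [Finset.sum_div]
    exact Finset.sum_congr rfl fun l _ => by ring
  rw [hlast]
  by_cases hkj : k = j <;> by_cases hki : k = i <;> simp [hkj, hki] <;>
    first | (split_ifs <;> ring) | ring

lemma conf_sum {n : ℕ} (g ginv : (Fin n → ℝ) → Matrix (Fin n) (Fin n) ℝ)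
    (f : (Fin n → ℝ) → ℝ) (x w : Fin n → ℝ) (k : Fin n)
    (hΓ : ∀ i j, christoffel (fun y => (f y) ^ 2 • g y) (fun y => ((f y) ^ 2)⁻¹ • ginv y) k i j x
      = christoffel g ginv k i j x
        + (if k = j then pd i f x / f x else 0)
        + (if k = i then pd j f x / f x else 0)
        - g x i j * ∑ l, ginv x k l * (pd l f x / f x)) :
    ∑ i, ∑ j, christoffel (fun y => (f y) ^ 2 • g y) (fun y => ((f y) ^ 2)⁻¹ • ginv y)
        k i j x * w i * w j
      = (∑ i, ∑ j, christoffel g ginv k i j x * w i * w j)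
        + 2 * (∑ i, (pd i f x / f x) * w i) * w k
        - ip g x w w * ∑ l, ginv x k l * (pd l f x / f x) := by
  set G := ∑ l, ginv x k l * (pd l f x / f x) with hG
  have expand : ∀ i j, christoffel (fun y => (f y) ^ 2 • g y)
        (fun y => ((f y) ^ 2)⁻¹ • ginv y) k i j x * w i * w j
      = christoffel g ginv k i j x * w i * w j
        + (if k = j then (pd i f x / f x) * w i * w j else 0)
        + (if k = i then (pd j f x / f x) * w i * w j else 0)
        - g x i j * w i * w j * G := by
    intro i j
    rw [hΓ i j]
    split_ifs <;> ring
  simp only [expand]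
  rw [Finset.sum_congr rfl (fun i (_ : i ∈ Finset.univ) => Finset.sum_sub_distrib _ _),
      Finset.sum_sub_distrib]
  rw [Finset.sum_congr rfl (fun i (_ : i ∈ Finset.univ) => Finset.sum_add_distrib),
      Finset.sum_add_distrib]
  rw [Finset.sum_congr rfl (fun i (_ : i ∈ Finset.univ) => Finset.sum_add_distrib),
      Finset.sum_add_distrib]
  have t2 : ∑ i, ∑ j, (if k = j then (pd i f x / f x) * w i * w j else 0)
      = ∑ i, (pd i f x / f x) * w i * w k := by
    simp [Finset.sum_ite_eq]
  have t3 : ∑ i, ∑ j, (if k = i then (pd j f x / f x) * w i * w j else 0)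
      = ∑ j, (pd j f x / f x) * w k * w j := by
    rw [Finset.sum_comm]
    simp [Finset.sum_ite_eq]
  have t4 : ∑ i, ∑ j, g x i j * w i * w j * G = ip g x w w * G := by
    rw [ip, Finset.sum_mul]
    exact Finset.sum_congr rfl fun i _ => by rw [Finset.sum_mul]
  rw [t2, t3, t4]
  have t5 : ∑ i, (pd i f x / f x) * w i * w k
      = (∑ i, (pd i f x / f x) * w i) * w k := by
    rw [Finset.sum_mul]
  have t6 : ∑ j, (pd j f x / f x) * w k * w j
      = (∑ j, (pd j f x / f x) * w j) * w k := by
    rw [Finset.sum_mul]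
    exact Finset.sum_congr rfl fun j _ => by ring
  rw [t5, t6]
  ring

/-- solutions of the Newton equation `∇_{q̇} q̇ = F(q̇,q)` with the force field
`F = ⟨grad ln ν, q̇⟩q̇ − 2⟨grad ln f, q̇⟩q̇ + ⟨q̇,q̇⟩ grad ln f` become, after the time
reparametrisation `dτ = ν(q)dt`, geodesics of the conformal metric `g* = f²g`. -/
theorem newton_to_conformal_geodesics {n : ℕ}
    (g ginv : (Fin n → ℝ) → Matrix (Fin n) (Fin n) ℝ)
    (f ν : (Fin n → ℝ) → ℝ)
    (hg : ∀ i j, ContDiff ℝ (⊤ : ℕ∞) fun x => g x i j)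
    (hgsym : ∀ x i j, g x i j = g x j i)
    (hinv : ∀ x, g x * ginv x = 1 ∧ ginv x * g x = 1)
    (hposdef : ∀ x u, u ≠ 0 → 0 < ip g x u u)
    (hf : ContDiff ℝ (⊤ : ℕ∞) f) (hf0 : ∀ x, f x ≠ 0)
    (hν : ContDiff ℝ (⊤ : ℕ∞) ν) (hν0 : ∀ x, ν x ≠ 0)
    -- the solution of the Newton equation
    (q : ℝ → Fin n → ℝ) (hq : ContDiff ℝ 2 q)
    (hNewton : ∀ t k,
      deriv (fun s => deriv (fun s' => q s' k) s) t
        + ∑ i, ∑ j, christoffel g ginv k i j (q t) *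
            deriv (fun s => q s i) t * deriv (fun s => q s j) t
      = chapForce g ginv f ν (q t) (fun i => deriv (fun s => q s i) t) k)
    -- the time reparametrisation dτ = ν(q) dt and its inverse σ
    (τ σ : ℝ → ℝ) (hτ : ContDiff ℝ 2 τ) (hσ : ContDiff ℝ 2 σ)
    (hτ' : ∀ t, deriv τ t = ν (q t)) (hστ : ∀ t, σ (τ t) = t) :
    ∀ t k,
      deriv (fun u => deriv (fun u' => q (σ u') k) u) (τ t)
        + ∑ i, ∑ j,
            christoffel (fun y => (f y) ^ 2 • g y) (fun y => ((f y) ^ 2)⁻¹ • ginv y)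
              k i j (q (σ (τ t))) *
              deriv (fun u => q (σ u) i) (τ t) * deriv (fun u => q (σ u) j) (τ t)
      = 0 := by
  intro t k
  have hqc : ∀ i, ContDiff ℝ 2 (fun s => q s i) := fun i =>
    ((ContinuousLinearMap.proj i : (Fin n → ℝ) →L[ℝ] ℝ).contDiff).comp hq
  have hqd : ∀ i s, DifferentiableAt ℝ (fun s' => q s' i) s := fun i s =>
    (hqc i).differentiable (by norm_num) s
  have hqcurve : ∀ s, HasDerivAt q (fun i => deriv (fun s' => q s' i) s) s := by
    intro s
    rw [hasDerivAt_pi]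
    intro i
    exact (hqd i s).hasDerivAt
  set x := q t with hx
  set a := ν x with ha
  have ha0 : a ≠ 0 := hν0 x
  have hτdiff : ∀ u, HasDerivAt τ (ν (q u)) u := by
    intro u
    have h := (hτ.differentiable (by norm_num) u).hasDerivAt
    rwa [hτ' u] at h
  have hσdiff : ∀ s, HasDerivAt σ (deriv σ s) s :=
    fun s => (hσ.differentiable (by norm_num) s).hasDerivAt
  have hσ'1 : ∀ u, deriv σ (τ u) * ν (q u) = 1 := by
    intro u
    have hcomp : HasDerivAt (fun w => σ (τ w)) (deriv σ (τ u) * ν (q u)) u :=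
      (hσdiff (τ u)).comp u (hτdiff u)
    have hid : (fun w => σ (τ w)) = fun w => w := funext hστ
    rw [hid] at hcomp
    simpa using hcomp.deriv.symm
  have hσ'τ : ∀ u, deriv σ (τ u) = (ν (q u))⁻¹ := fun u =>
    eq_inv_of_mul_eq_one_left (by linarith [mul_comm (deriv σ (τ u)) (ν (q u)), hσ'1 u])
  have hνdot : HasDerivAt (fun u => ν (q u)) (∑ i, deriv (fun s => q s i) t * pd i ν x) t := by
    have h := ((hν.differentiable (by simp) (q t)).hasFDerivAt).comp_hasDerivAt t (hqcurve t)
    rwa [fderiv_apply_eq_sum] at h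
  have hσ1 : ContDiff ℝ 1 (deriv σ) := by
    have := (contDiff_succ_iff_deriv.mp (by exact_mod_cast hσ : ContDiff ℝ ((1:ℕ)+1) σ)).2.2
    exact_mod_cast this
  have hσ'' : deriv (deriv σ) (τ t) = -(∑ i, deriv (fun s => q s i) t * pd i ν x) / a^3 := by
    have hL : HasDerivAt (fun u => deriv σ (τ u)) (deriv (deriv σ) (τ t) * a) t :=
      ((hσ1.differentiable one_ne_zero (τ t)).hasDerivAt).comp t (hτdiff t)
    have hR : HasDerivAt (fun u => (ν (q u))⁻¹)
        (-(∑ i, deriv (fun s => q s i) t * pd i ν x) / a^2) t := hνdot.inv ha0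
    have heq : (fun u => deriv σ (τ u)) = fun u => (ν (q u))⁻¹ := funext hσ'τ
    rw [heq] at hL
    have := hL.unique hR
    field_simp at this ⊢
    linarith [this]
  have hw : ∀ i u, HasDerivAt (fun u' => q (σ u') i)
      (deriv (fun s => q s i) (σ u) * deriv σ u) u := fun i u =>
    ((hqd i (σ u)).hasDerivAt).comp u (hσdiff u)
  have hvel : ∀ i, deriv (fun u => q (σ u) i) (τ t)
      = deriv (fun s => q s i) t * a⁻¹ := by
    intro i
    rw [(hw i (τ t)).deriv, hστ t, hσ'τ t]
  have hD1 : ContDiff ℝ 1 (deriv (fun s => q s k)) := by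
    have := (contDiff_succ_iff_deriv.mp
      (by exact_mod_cast hqc k : ContDiff ℝ ((1:ℕ)+1) (fun s => q s k))).2.2
    exact_mod_cast this
  have hwfun : (fun u => deriv (fun u' => q (σ u') k) u)
      = fun u => deriv (fun s => q s k) (σ u) * deriv σ u := by
    funext u; exact (hw k u).deriv
  have hDσ : HasDerivAt (fun u => deriv (fun s => q s k) (σ u))
      (deriv (deriv (fun s => q s k)) (σ (τ t)) * deriv σ (τ t)) (τ t) :=
    ((hD1.differentiable one_ne_zero (σ (τ t))).hasDerivAt).comp (τ t) (hσdiff (τ t))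
  have hprod := hDσ.mul ((hσ1.differentiable one_ne_zero (τ t)).hasDerivAt)
  have hsecond : deriv (fun u => deriv (fun u' => q (σ u') k) u) (τ t)
      = deriv (fun s => deriv (fun s' => q s' k) s) t * a⁻¹ * a⁻¹
        + deriv (fun s => q s k) t *
            (-(∑ i, deriv (fun s => q s i) t * pd i ν x) / a^3) := by
    rw [hwfun, (show HasDerivAt (fun u => deriv (fun s => q s k) (σ u) * deriv σ u) _ (τ t) from hprod).deriv, hστ t, hσ'τ t, hσ'']
  have hΓ := fun i j => christoffel_conformal g ginv f hg hf hf0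
    (fun y => (hinv y).2) k i j x
  have hsum := conf_sum g ginv f x
    (fun i => deriv (fun s => q s i) t * a⁻¹) k hΓ
  rw [hστ t]
  simp only [hvel, hsecond, ← hx]
  rw [hsum]
  -- scaling identities
  have h1 : ∑ i, ∑ j, christoffel g ginv k i j x *
        (deriv (fun s => q s i) t * a⁻¹) * (deriv (fun s => q s j) t * a⁻¹)
      = (∑ i, ∑ j, christoffel g ginv k i j x *
          deriv (fun s => q s i) t * deriv (fun s => q s j) t) * (a⁻¹ * a⁻¹) := by
    rw [Finset.sum_mul]
    refine Finset.sum_congr rfl fun i _ => ?_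
    rw [Finset.sum_mul]
    exact Finset.sum_congr rfl fun j _ => by ring
  have h2 : ∑ i, (pd i f x / f x) * (deriv (fun s => q s i) t * a⁻¹)
      = (∑ i, (pd i f x / f x) * deriv (fun s => q s i) t) * a⁻¹ := by
    rw [Finset.sum_mul]
    exact Finset.sum_congr rfl fun i _ => by ring
  have h3 : ip g x (fun i => deriv (fun s => q s i) t * a⁻¹)
        (fun i => deriv (fun s => q s i) t * a⁻¹)
      = ip g x (fun i => deriv (fun s => q s i) t)
          (fun i => deriv (fun s => q s i) t) * (a⁻¹ * a⁻¹) := by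
    simp only [ip]
    rw [Finset.sum_mul]
    refine Finset.sum_congr rfl fun i _ => ?_
    rw [Finset.sum_mul]
    exact Finset.sum_congr rfl fun j _ => by ring
  rw [h1, h2, h3]
  have hN := hNewton t k
  simp only [chapForce, ← hx] at hN
  have hNν : ∑ i, (pd i ν x / ν x) * deriv (fun s => q s i) t
      = (∑ i, deriv (fun s => q s i) t * pd i ν x) * a⁻¹ := by
    rw [Finset.sum_mul]
    refine Finset.sum_congr rfl fun i _ => ?_
    rw [← ha]
    ring
  rw [hNν] at hN
  linear_combination (a⁻¹ * a⁻¹) * hN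
end

section
/- For the Newton equation ∇_{q̇} q̇ = F with force field F = ⟨grad ln ν, q̇⟩ q̇ − 2⟨grad ln f, q̇⟩ q̇ + ⟨q̇,q̇⟩ grad ln f on a Riemannian manifold (M,g), the function (f²/(2ν²))⟨q̇,q̇⟩ is a first integral of the flow. -/
open scoped BigOperators

section Aux

lemma fderiv_eq_sum_pd {n : ℕ} (φ : (Fin n → ℝ) → ℝ) (x : Fin n → ℝ)
    (w : Fin n → ℝ) : fderiv ℝ φ x w = ∑ i, pd i φ x * w i := by
  have hw : w = ∑ i, w i • (Pi.single i 1 : Fin n → ℝ) := by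
    ext j
    simp [Finset.sum_apply, Pi.single_apply]
  conv_lhs => rw [hw]
  rw [map_sum]
  simp [pd, mul_comm]

lemma comp_hasDerivAt {n : ℕ} (q : ℝ → Fin n → ℝ) (t : ℝ) (hq : DifferentiableAt ℝ q t)
    (φ : (Fin n → ℝ) → ℝ) (hφ : DifferentiableAt ℝ φ (q t)) :
    HasDerivAt (fun s => φ (q s)) (∑ i, pd i φ (q t) * deriv (fun s => q s i) t) t := by
  have h1 : HasDerivAt q (deriv q t) t := hq.hasDerivAt
  have h3 : ∀ i, deriv (fun s => q s i) t = deriv q t i := by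
    intro i
    have := ((ContinuousLinearMap.proj (R := ℝ) (φ := fun _ : Fin n => ℝ)
      i).hasFDerivAt.comp_hasDerivAt t h1)
    simpa [Function.comp_def] using this.deriv
  have h2 := (hφ.hasFDerivAt.comp_hasDerivAt t h1)
  have he : fderiv ℝ φ (q t) (deriv q t) = ∑ i, pd i φ (q t) * deriv (fun s => q s i) t := by
    rw [fderiv_eq_sum_pd φ (q t) (deriv q t)]
    simp [h3]
  rw [he] at h2
  exact h2

lemma proj_hasDerivAt {n : ℕ} (q : ℝ → Fin n → ℝ) (t : ℝ) (hq : DifferentiableAt ℝ q t)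
    (i : Fin n) : HasDerivAt (fun s => q s i) (deriv (fun s => q s i) t) t := by
  have h1 : HasDerivAt q (deriv q t) t := hq.hasDerivAt
  have := ((ContinuousLinearMap.proj (R := ℝ) (φ := fun _ : Fin n => ℝ)
    i).hasFDerivAt.comp_hasDerivAt t h1)
  simp only [Function.comp_def, ContinuousLinearMap.proj_apply] at this
  rw [this.deriv]
  exact this

lemma vel_diff {n : ℕ} (q : ℝ → Fin n → ℝ) (hq : ContDiff ℝ 2 q) (i : Fin n) :
    Differentiable ℝ (fun s => deriv (fun s' => q s' i) s) := by
  have hqi : ContDiff ℝ 2 (fun s => q s i) :=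
    (ContinuousLinearMap.proj (R := ℝ) (φ := fun _ : Fin n => ℝ) i).contDiff.comp hq
  have hqi' : ContDiff ℝ ((1:ℕ) + 1) (fun s => q s i) := by
    convert hqi using 2
    norm_num
  rw [contDiff_succ_iff_deriv] at hqi'
  exact hqi'.2.2.differentiable (by norm_num)

lemma tri1 {n : ℕ} (F : Fin n → Fin n → Fin n → ℝ) :
    ∑ a, ∑ b, ∑ c, F a b c = ∑ b, ∑ a, ∑ c, F a b c := Finset.sum_comm
lemma tri2 {n : ℕ} (F : Fin n → Fin n → Fin n → ℝ) :
    ∑ a, ∑ b, ∑ c, F a b c = ∑ a, ∑ c, ∑ b, F a b c :=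
  Finset.sum_congr rfl fun _ _ => Finset.sum_comm
lemma tri3 {n : ℕ} (F : Fin n → Fin n → Fin n → ℝ) :
    ∑ a, ∑ b, ∑ c, F a b c = ∑ c, ∑ a, ∑ b, F a b c := by
  rw [tri2 F]; exact tri1 _

lemma keyA {n : ℕ} (G Ginv : Matrix (Fin n) (Fin n) ℝ) (P : Fin n → Fin n → Fin n → ℝ)
    (V W Fν Ff : Fin n → ℝ)
    (hsym : ∀ i j, G i j = G j i)
    (hcon : ∀ j l, ∑ i, G j i * Ginv i l = if j = l then 1 else 0)
    (hW : ∀ k, W k = (∑ i, Fν i * V i) * V k - 2*(∑ i, Ff i * V i) * V k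
        + (∑ i, ∑ j, G i j * V i * V j) * (∑ l, Ginv k l * Ff l)
        - ∑ i, ∑ j, ((1/2) * ∑ l, Ginv k l * (P i l j + P j l i - P l i j)) * V i * V j) :
    ∑ i, ∑ j, (((∑ l, P l i j * V l) * V i + G i j * W i) * V j + G i j * V i * W j)
      = 2 * ((∑ i, Fν i * V i) - (∑ i, Ff i * V i)) * (∑ i, ∑ j, G i j * V i * V j) := by
  set A := ∑ i, Fν i * V i with hA
  set B := ∑ i, Ff i * V i with hB
  set Kt := ∑ i, ∑ j, G i j * V i * V j with hKt
  set S := ∑ l, ∑ i, ∑ j, P l i j * V l * V i * V j with hS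
  have step1 : ∑ i, ∑ j, (((∑ l, P l i j * V l) * V i + G i j * W i) * V j + G i j * V i * W j)
      = S + (∑ i, ∑ j, G i j * W i * V j) + (∑ i, ∑ j, G i j * V i * W j) := by
    rw [hS, tri1 (fun l i j => P l i j * V l * V i * V j)]
    rw [tri2 (fun i l j => P l i j * V l * V i * V j)]
    simp only [← Finset.sum_add_distrib]
    refine Finset.sum_congr rfl fun i _ => ?_
    refine Finset.sum_congr rfl fun j _ => ?_
    rw [show (∑ b, P b i j * V b * V i * V j) = (∑ l, P l i j * V l) * V i * V j from by
      rw [Finset.sum_mul, Finset.sum_mul]]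
    ring
  have hδ : ∀ (j : Fin n) (c : Fin n → ℝ), ∑ i, G i j * (∑ l, Ginv i l * c l) = c j := by
    intro j c
    have e1 : ∑ i, G i j * (∑ l, Ginv i l * c l) = ∑ l, (∑ i, G i j * Ginv i l) * c l := by
      simp only [Finset.mul_sum, Finset.sum_mul]
      rw [Finset.sum_comm]
      exact Finset.sum_congr rfl fun l _ => Finset.sum_congr rfl fun i _ => by ring
    rw [e1]
    have e2 : ∀ l, (∑ i, G i j * Ginv i l) = if j = l then 1 else 0 := fun l => by
      rw [← hcon j l]; exact Finset.sum_congr rfl fun i _ => by rw [hsym]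
    simp [e2, ite_mul]
  have step2 : ∑ i, ∑ j, G i j * V i * W j = ∑ i, ∑ j, G i j * W i * V j := by
    rw [Finset.sum_comm]
    exact Finset.sum_congr rfl fun j _ => Finset.sum_congr rfl fun i _ => by
      rw [hsym]; ring
  have hX2 : (∑ i, ∑ j, G i j * (∑ l, Ginv i l * Ff l) * V j) = B := by
    rw [Finset.sum_comm, hB]
    refine Finset.sum_congr rfl fun j _ => ?_
    rw [show (∑ i, G i j * (∑ l, Ginv i l * Ff l) * V j)
        = (∑ i, G i j * (∑ l, Ginv i l * Ff l)) * V j from (Finset.sum_mul ..).symm, hδ j Ff]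
  have hC : ∀ i, (∑ a, ∑ b, ((1/2 : ℝ) * ∑ l, Ginv i l * (P a l b + P b l a - P l a b)) * V a * V b)
      = ∑ l, Ginv i l * (∑ a, ∑ b, (1/2) * (P a l b + P b l a - P l a b) * V a * V b) := by
    intro i
    have e1 : (∑ a, ∑ b, ((1/2 : ℝ) * ∑ l, Ginv i l * (P a l b + P b l a - P l a b)) * V a * V b)
        = ∑ a, ∑ b, ∑ l, Ginv i l * ((1/2) * (P a l b + P b l a - P l a b) * V a * V b) := by
      refine Finset.sum_congr rfl fun a _ => Finset.sum_congr rfl fun b _ => ?_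
      rw [Finset.mul_sum, Finset.sum_mul, Finset.sum_mul]
      exact Finset.sum_congr rfl fun l _ => by ring
    rw [e1, tri3 (fun a b l => Ginv i l * ((1/2) * (P a l b + P b l a - P l a b) * V a * V b))]
    refine Finset.sum_congr rfl fun l _ => ?_
    rw [Finset.mul_sum]
    exact Finset.sum_congr rfl fun a _ => by rw [Finset.mul_sum]
  have hX3 : (∑ i, ∑ j, G i j *
        (∑ a, ∑ b, ((1/2 : ℝ) * ∑ l, Ginv i l * (P a l b + P b l a - P l a b)) * V a * V b) * V j)
      = S / 2 := by
    have e1 : (∑ i, ∑ j, G i j *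
        (∑ a, ∑ b, ((1/2 : ℝ) * ∑ l, Ginv i l * (P a l b + P b l a - P l a b)) * V a * V b) * V j)
        = ∑ j, (∑ a, ∑ b, (1/2 : ℝ) * (P a j b + P b j a - P j a b) * V a * V b) * V j := by
      rw [Finset.sum_comm]
      refine Finset.sum_congr rfl fun j _ => ?_
      rw [show (∑ i, G i j *
          (∑ a, ∑ b, ((1/2 : ℝ) * ∑ l, Ginv i l * (P a l b + P b l a - P l a b)) * V a * V b) * V j)
          = (∑ i, G i j *
          (∑ a, ∑ b, ((1/2 : ℝ) * ∑ l, Ginv i l * (P a l b + P b l a - P l a b)) * V a * V b)) * V j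
        from (Finset.sum_mul ..).symm]
      congr 1
      calc ∑ i, G i j * (∑ a, ∑ b, ((1/2 : ℝ) * ∑ l, Ginv i l * (P a l b + P b l a - P l a b)) * V a * V b)
          = ∑ i, G i j * (∑ l, Ginv i l *
              (∑ a, ∑ b, (1/2 : ℝ) * (P a l b + P b l a - P l a b) * V a * V b)) :=
            Finset.sum_congr rfl fun i _ => by rw [hC i]
        _ = _ := hδ j _
    rw [e1]
    have e2 : (∑ j, (∑ a, ∑ b, (1/2 : ℝ) * (P a j b + P b j a - P j a b) * V a * V b) * V j)
        = ∑ j, ∑ a, ∑ b, (1/2 : ℝ) * (P a j b + P b j a - P j a b) * V a * V b * V j := by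
      refine Finset.sum_congr rfl fun j _ => ?_
      rw [Finset.sum_mul]
      exact Finset.sum_congr rfl fun a _ => by rw [Finset.sum_mul]
    rw [e2]
    have e3 : ∀ (j a b : Fin n), (1/2 : ℝ) * (P a j b + P b j a - P j a b) * V a * V b * V j
        = (1/2) * (P a j b * V a * V b * V j) + (1/2) * (P b j a * V a * V b * V j)
          - (1/2) * (P j a b * V a * V b * V j) := fun j a b => by ring
    simp only [e3, Finset.sum_add_distrib, Finset.sum_sub_distrib, ← Finset.mul_sum]
    have h1 : (∑ j, ∑ a, ∑ b, P a j b * V a * V b * V j) = S := by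
      rw [hS, tri1 (fun j a b => P a j b * V a * V b * V j)]
      exact Finset.sum_congr rfl fun a _ => Finset.sum_congr rfl fun j _ =>
        Finset.sum_congr rfl fun b _ => by ring
    have h2 : (∑ j, ∑ a, ∑ b, P b j a * V a * V b * V j) = S := by
      rw [hS, tri3 (fun j a b => P b j a * V a * V b * V j)]
      exact Finset.sum_congr rfl fun b _ => Finset.sum_congr rfl fun j _ =>
        Finset.sum_congr rfl fun a _ => by ring
    have h3 : (∑ j, ∑ a, ∑ b, P j a b * V a * V b * V j) = S := by
      rw [hS]
      exact Finset.sum_congr rfl fun j _ => Finset.sum_congr rfl fun a _ =>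
        Finset.sum_congr rfl fun b _ => by ring
    rw [h1, h2, h3]; ring
  have hX : ∑ i, ∑ j, G i j * W i * V j = (A - B) * Kt - S / 2 := by
    have e : ∀ i j, G i j * W i * V j
        = A * (G i j * V i * V j) - 2*B*(G i j * V i * V j)
          + Kt * (G i j * (∑ l, Ginv i l * Ff l) * V j)
          - G i j * (∑ a, ∑ b, ((1/2 : ℝ) * ∑ l, Ginv i l *
              (P a l b + P b l a - P l a b)) * V a * V b) * V j :=
      fun i j => by rw [hW i]; ring
    calc ∑ i, ∑ j, G i j * W i * V j
        = ∑ i, ∑ j, (A * (G i j * V i * V j) - 2*B*(G i j * V i * V j)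
          + Kt * (G i j * (∑ l, Ginv i l * Ff l) * V j)
          - G i j * (∑ a, ∑ b, ((1/2 : ℝ) * ∑ l, Ginv i l *
              (P a l b + P b l a - P l a b)) * V a * V b) * V j) :=
          Finset.sum_congr rfl fun i _ => Finset.sum_congr rfl fun j _ => e i j
      _ = (A - B) * Kt - S / 2 := by
          simp only [Finset.sum_add_distrib, Finset.sum_sub_distrib, ← Finset.mul_sum]
          rw [hX2, hX3, ← hKt]
          ring
  rw [step1, step2, hX]
  ring

end Aux

/-- for the Newton equation `∇_{q̇} q̇ = F` with the force
`F = ⟨grad ln ν, q̇⟩q̇ − 2⟨grad ln f, q̇⟩q̇ + ⟨q̇,q̇⟩ grad ln f`, the quantity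
`(f²/(2ν²))⟨q̇,q̇⟩` is a first integral of the flow. -/
theorem chaplygin_first_integral {n : ℕ}
    (g ginv : (Fin n → ℝ) → Matrix (Fin n) (Fin n) ℝ)
    (f ν : (Fin n → ℝ) → ℝ)
    (hg : ∀ i j, ContDiff ℝ (⊤ : ℕ∞) fun x => g x i j)
    (hgsym : ∀ x i j, g x i j = g x j i)
    (hinv : ∀ x, g x * ginv x = 1 ∧ ginv x * g x = 1)
    (hf : ContDiff ℝ (⊤ : ℕ∞) f) (hf0 : ∀ x, f x ≠ 0)
    (hν : ContDiff ℝ (⊤ : ℕ∞) ν) (hν0 : ∀ x, ν x ≠ 0)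
    (q : ℝ → Fin n → ℝ) (hq : ContDiff ℝ 2 q)
    (hNewton : ∀ t k,
      deriv (fun s => deriv (fun s' => q s' k) s) t
        + ∑ i, ∑ j, christoffel g ginv k i j (q t) *
            deriv (fun s => q s i) t * deriv (fun s => q s j) t
      = chapForce g ginv f ν (q t) (fun i => deriv (fun s => q s i) t) k) :
    ∀ t₁ t₂ : ℝ,
      (f (q t₁)) ^ 2 / (2 * (ν (q t₁)) ^ 2) *
          ip g (q t₁) (fun i => deriv (fun s => q s i) t₁) (fun i => deriv (fun s => q s i) t₁)
        = (f (q t₂)) ^ 2 / (2 * (ν (q t₂)) ^ 2) *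
            ip g (q t₂) (fun i => deriv (fun s => q s i) t₂)
              (fun i => deriv (fun s => q s i) t₂) := by
  intro t₁ t₂
  set E : ℝ → ℝ := fun s => f (q s) ^ 2 / (2 * ν (q s) ^ 2) *
    ∑ i, ∑ j, g (q s) i j * deriv (fun s' => q s' i) s * deriv (fun s' => q s' j) s with hE
  have hqd : Differentiable ℝ q := hq.differentiable (by norm_num)
  have hEderiv : ∀ t, HasDerivAt E 0 t := by
    intro t
    set x := q t with hx
    set V : Fin n → ℝ := fun i => deriv (fun s => q s i) t with hV
    set W : Fin n → ℝ := fun i => deriv (fun s => deriv (fun s' => q s' i) s) t with hWdef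
    have hVd : ∀ i, HasDerivAt (fun s => q s i) (V i) t :=
      fun i => proj_hasDerivAt q t (hqd t) i
    have hWd : ∀ i, HasDerivAt (fun s => deriv (fun s' => q s' i) s) (W i) t :=
      fun i => ((vel_diff q hq i) t).hasDerivAt
    have hfq : HasDerivAt (fun s => f (q s)) (∑ i, pd i f x * V i) t :=
      comp_hasDerivAt q t (hqd t) f (hf.differentiable (by simp)).differentiableAt
    have hνq : HasDerivAt (fun s => ν (q s)) (∑ i, pd i ν x * V i) t :=
      comp_hasDerivAt q t (hqd t) ν (hν.differentiable (by simp)).differentiableAt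
    have hgq : ∀ i j, HasDerivAt (fun s => g (q s) i j)
        (∑ l, pd l (fun y => g y i j) x * V l) t :=
      fun i j => comp_hasDerivAt q t (hqd t) _ (((hg i j).differentiable (by simp)).differentiableAt)
    -- derivative of the kinetic term
    have hK : HasDerivAt (fun s => ∑ i, ∑ j, g (q s) i j * deriv (fun s' => q s' i) s *
          deriv (fun s' => q s' j) s)
        (∑ i, ∑ j, (((∑ l, pd l (fun y => g y i j) x * V l) * V i + g x i j * W i) * V j
          + g x i j * V i * W j)) t := by
      refine HasDerivAt.fun_sum fun i _ => HasDerivAt.fun_sum fun j _ => ?_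
      exact ((hgq i j).mul (hWd i)).mul (hWd j)
    have hden : (2 : ℝ) * ν x ^ 2 ≠ 0 := by
      have := hν0 x; positivity
    have hquot := ((hfq.pow 2).div ((hνq.pow 2).const_mul 2) hden)
    have hEd := hquot.mul hK
    -- now show the derivative is zero
    refine hEd.congr_deriv (Eq.symm ?_)
    simp only [Pi.pow_apply, Pi.div_apply, Pi.mul_apply, ← hx]
    -- algebra
    have hcon : ∀ j l, ∑ i, g x j i * ginv x i l = if j = l then 1 else 0 := by
      intro j l
      have h1 := congrArg (fun M => M j l) (hinv x).1
      simpa [Matrix.mul_apply, Matrix.one_apply] using h1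
    have hW' : ∀ k, W k = (∑ i, (pd i ν x / ν x) * V i) * V k
        - 2*(∑ i, (pd i f x / f x) * V i) * V k
        + (∑ i, ∑ j, g x i j * V i * V j) * (∑ l, ginv x k l * (pd l f x / f x))
        - ∑ i, ∑ j, ((1/2) * ∑ l, ginv x k l *
            (pd i (fun y => g y l j) x + pd j (fun y => g y l i) x
              - pd l (fun y => g y i j) x)) * V i * V j := by
      intro k
      have h := hNewton t k
      simp only [christoffel, chapForce, ip, ← hx, ← hV, ← hWdef] at h ⊢
      linarith
    have hK' := keyA (g x) (ginv x) (fun a b c => pd a (fun y => g y b c) x) V W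
      (fun i => pd i ν x / ν x) (fun i => pd i f x / f x)
      (fun i j => hgsym x i j) hcon hW'
    have hK'' : (∑ i, ∑ j, (((∑ l, pd l (fun y => g y i j) x * V l) * V i
          + g x i j * W i) * V j + g x i j * V i * W j))
        = 2 * ((∑ i, (pd i ν x / ν x) * V i) - (∑ i, (pd i f x / f x) * V i)) *
            (∑ i, ∑ j, g x i j * V i * V j) := hK'
    rw [hK'']
    have hFd : (∑ i, pd i f x * V i) = f x * (∑ i, (pd i f x / f x) * V i) := by
      rw [Finset.mul_sum]
      refine Finset.sum_congr rfl fun i _ => ?_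
      field_simp
      exact (mul_div_cancel_right₀ _ (hf0 x)).symm
    have hNd : (∑ i, pd i ν x * V i) = ν x * (∑ i, (pd i ν x / ν x) * V i) := by
      rw [Finset.mul_sum]
      refine Finset.sum_congr rfl fun i _ => ?_
      field_simp
      exact (mul_div_cancel_right₀ _ (hν0 x)).symm
    rw [hFd, hNd]
    set A := ∑ i, (pd i ν x / ν x) * V i
    set B := ∑ i, (pd i f x / f x) * V i
    set Kt := ∑ i, ∑ j, g x i j * V i * V j
    have hfx := hf0 x
    have hνx := hν0 x
    field_simp
    ring
  have hEdiff : Differentiable ℝ E := fun t => (hEderiv t).differentiableAt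
  have hconst := is_const_of_deriv_eq_zero hEdiff (fun t => (hEderiv t).deriv) t₁ t₂
  simpa [hE, ip] using hconst
end

section
/- Let A = diag(a₁,…,aₙ) be a positive definite diagonal matrix and ε ≠ 0. Under the map x = A^{1/2}γ / √((Aγ,γ)) from the unit sphere {(γ,γ)=1} to the unit sphere {(x,x)=1}, the metric g*(X,Y) = (Aγ,γ)^{1/ε − 2}((AX,Y)(Aγ,γ) − (Aγ,X)(Aγ,Y)) on tangent vectors X,Y ∈ T_γ S^{n-1} is transformed into the metric g(X,Y) = (A⁻¹x,x)^{−1/ε}(X,Y) on T_x S^{n-1}, which is conformally equivalent to the round metric. -/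
open scoped BigOperators
open Real

/-- The map `γ ↦ x = A^{1/2}γ/√((Aγ,γ))` for `A = diag(a₁,…,aₙ)`. -/
noncomputable def sphereMap {n : ℕ} (a : Fin n → ℝ) (γ : Fin n → ℝ) : Fin n → ℝ :=
  fun i => Real.sqrt (a i) * γ i / Real.sqrt (∑ j, a j * γ j ^ 2)

/-!
With `Q = (Aγ,γ)`, the differential of `x = A^{1/2}γ/√Q` is
`dx(Z) = A^{1/2}(Q Z - (Aγ,Z) γ) / Q^{3/2}`, so
`(dx X, dx Y) = ((AX,Y) Q - (Aγ,X)(Aγ,Y)) / Q²`, while `(A⁻¹x,x) = (γ,γ)/Q = 1/Q` on the sphere.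
The two metrics thus differ by the factor `Q^{1/ε-2} · Q² = Q^{1/ε} = (A⁻¹x,x)^{-1/ε}`.
-/

open Finset

variable {n : ℕ} (a : Fin n → ℝ)

lemma sphereMap_differentiableAt {γ : Fin n → ℝ} (hQ : 0 < ∑ j, a j * γ j ^ 2) :
    DifferentiableAt ℝ (sphereMap a) γ :=
  differentiableAt_pi.2 fun i => by unfold sphereMap; fun_prop (disch := positivity)

lemma hasDerivAt_line_apply (γ Z : Fin n → ℝ) (j : Fin n) :
    HasDerivAt (fun t : ℝ => (γ + t • Z) j) (Z j) 0 := by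
  simpa using ((hasDerivAt_id (0:ℝ)).mul_const (Z j)).const_add (γ j)

lemma hasDerivAt_weightedSumSq_line (γ Z : Fin n → ℝ) :
    HasDerivAt (fun t : ℝ => ∑ j, a j * (γ + t • Z) j ^ 2) (2 * ∑ j, a j * γ j * Z j) 0 := by
  rw [mul_sum]
  refine HasDerivAt.fun_sum fun j _ => ?_
  have h : HasDerivAt (fun t : ℝ => a j * (γ + t • Z) j ^ 2) _ 0 :=
    ((hasDerivAt_line_apply γ Z j).pow 2).const_mul (a j)
  refine h.congr_deriv ?_
  simp only [zero_smul, add_zero]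
  ring

lemma hasDerivAt_sphereMap_line {γ : Fin n → ℝ} (hQ : 0 < ∑ j, a j * γ j ^ 2) (Z : Fin n → ℝ)
    (i : Fin n) :
    HasDerivAt (fun t : ℝ => sphereMap a (γ + t • Z) i)
      (√(a i) * (Z i * ∑ j, a j * γ j ^ 2 - γ i * ∑ j, a j * γ j * Z j)
        / (√(∑ j, a j * γ j ^ 2) * ∑ j, a j * γ j ^ 2)) 0 := by
  have hQ0 : ∑ j, a j * (γ + (0:ℝ) • Z) j ^ 2 = ∑ j, a j * γ j ^ 2 := by simp
  have hsqrt := (hasDerivAt_weightedSumSq_line a γ Z).sqrt (by rw [hQ0]; exact hQ.ne')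
  have hquot : HasDerivAt (fun t : ℝ => sphereMap a (γ + t • Z) i) _ 0 :=
    ((hasDerivAt_line_apply γ Z i).const_mul √(a i)).div hsqrt (by rw [hQ0]; positivity)
  refine hquot.congr_deriv ?_
  simp only [zero_smul, add_zero]
  field_simp
  rw [sq_sqrt hQ.le]
  ring

lemma fderiv_sphereMap_apply {γ : Fin n → ℝ} (hQ : 0 < ∑ j, a j * γ j ^ 2) (Z : Fin n → ℝ)
    (i : Fin n) :
    fderiv ℝ (sphereMap a) γ Z i
      = √(a i) * (Z i * ∑ j, a j * γ j ^ 2 - γ i * ∑ j, a j * γ j * Z j)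
        / (√(∑ j, a j * γ j ^ 2) * ∑ j, a j * γ j ^ 2) := by
  have hline : HasDerivAt (fun t : ℝ => γ + t • Z) Z 0 :=
    hasDerivAt_pi.2 (hasDerivAt_line_apply γ Z)
  have hcurve : HasDerivAt (fun t : ℝ => sphereMap a (γ + t • Z)) (fderiv ℝ (sphereMap a) γ Z) 0 :=
    (sphereMap_differentiableAt a hQ).hasFDerivAt.comp_hasDerivAt_of_eq 0 hline (by simp)
  exact (hasDerivAt_pi.1 hcurve i).unique (hasDerivAt_sphereMap_line a hQ Z i)

lemma sum_fderiv_sphereMap_mul (ha : ∀ i, 0 ≤ a i) {γ : Fin n → ℝ}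
    (hQ : 0 < ∑ j, a j * γ j ^ 2) (X Y : Fin n → ℝ) :
    ∑ i, fderiv ℝ (sphereMap a) γ X i * fderiv ℝ (sphereMap a) γ Y i
      = ((∑ i, a i * X i * Y i) * (∑ j, a j * γ j ^ 2)
          - (∑ i, a i * γ i * X i) * (∑ i, a i * γ i * Y i)) / (∑ j, a j * γ j ^ 2) ^ 2 := by
  set Q := ∑ j, a j * γ j ^ 2 with hQdef
  set SX := ∑ i, a i * γ i * X i with hSX
  set SY := ∑ i, a i * γ i * Y i with hSY
  have hterm : ∀ i, fderiv ℝ (sphereMap a) γ X i * fderiv ℝ (sphereMap a) γ Y i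
      = (Q ^ 2 * (a i * X i * Y i) - Q * SY * (a i * γ i * X i) - Q * SX * (a i * γ i * Y i)
          + SX * SY * (a i * γ i ^ 2)) / Q ^ 3 := by
    intro i
    rw [fderiv_sphereMap_apply a hQ, fderiv_sphereMap_apply a hQ, ← hQdef, ← hSX, ← hSY]
    field_simp
    rw [sq_sqrt (ha i), sq_sqrt hQ.le]
    ring
  simp only [hterm, ← sum_div, sum_add_distrib, sum_sub_distrib, ← mul_sum]
  field_simp
  ring

lemma sum_inv_mul_sphereMap_sq (ha : ∀ i, 0 < a i) (γ : Fin n → ℝ) :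
    ∑ i, (a i)⁻¹ * sphereMap a γ i ^ 2 = (∑ i, γ i ^ 2) / ∑ j, a j * γ j ^ 2 := by
  have hQ : 0 ≤ ∑ j, a j * γ j ^ 2 := sum_nonneg fun j _ => by have := ha j; positivity
  rw [sum_div]
  refine sum_congr rfl fun i _ => ?_
  rw [sphereMap, div_pow, mul_pow, sq_sqrt (ha i).le, sq_sqrt hQ]
  field_simp [(ha i).ne']

lemma weightedSumSq_pos (ha : ∀ i, 0 < a i) {γ : Fin n → ℝ} (hγ : γ ≠ 0) :
    0 < ∑ j, a j * γ j ^ 2 := by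
  obtain ⟨i, hi⟩ := Function.ne_iff.1 hγ
  exact sum_pos' (fun j _ => by have := ha j; positivity)
    ⟨i, mem_univ i, mul_pos (ha i) (sq_pos_of_ne_zero hi)⟩

theorem metric_transforms_to_conformal_general {n : ℕ} (a : Fin n → ℝ) (ε : ℝ)
    (ha : ∀ i, 0 < a i)
    (γ X Y : Fin n → ℝ)
    (hγ : ∑ i, γ i ^ 2 = 1) :
    (∑ i, a i * γ i ^ 2) ^ (1 / ε - 2 : ℝ) *
        ((∑ i, a i * X i * Y i) * (∑ i, a i * γ i ^ 2)
          - (∑ i, a i * γ i * X i) * (∑ i, a i * γ i * Y i))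
      = (∑ i, (a i)⁻¹ * (sphereMap a γ i) ^ 2) ^ (-(1 / ε) : ℝ) *
          ∑ i, (fderiv ℝ (sphereMap a) γ X) i * (fderiv ℝ (sphereMap a) γ Y) i := by
  have hγ0 : γ ≠ 0 := by rintro rfl; simp at hγ
  have hQ := weightedSumSq_pos a ha hγ0
  rw [sum_inv_mul_sphereMap_sq a ha, hγ, sum_fderiv_sphereMap_mul a (fun i => (ha i).le) hQ,
    one_div (∑ j, a j * γ j ^ 2), inv_rpow hQ.le, ← rpow_neg hQ.le, neg_neg, rpow_sub hQ, rpow_two]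
  ring

/-- under `x = A^{1/2}γ/√((Aγ,γ))` the metric
`g*(X,Y) = (Aγ,γ)^{1/ε−2}((AX,Y)(Aγ,γ) − (Aγ,X)(Aγ,Y))` on `T_γS^{n-1}` transforms to the
conformally flat metric `g(X,Y) = (A⁻¹x,x)^{−1/ε}(X,Y)` on `T_xS^{n-1}`. -/
theorem metric_transforms_to_conformal {n : ℕ} (a : Fin n → ℝ) (ε : ℝ)
    (ha : ∀ i, 0 < a i) (hε : ε ≠ 0)
    (γ X Y : Fin n → ℝ)
    (hγ : ∑ i, γ i ^ 2 = 1)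
    (hX : ∑ i, γ i * X i = 0) (hY : ∑ i, γ i * Y i = 0) :
    (∑ i, a i * γ i ^ 2) ^ (1 / ε - 2 : ℝ) *
        ((∑ i, a i * X i * Y i) * (∑ i, a i * γ i ^ 2)
          - (∑ i, a i * γ i * X i) * (∑ i, a i * γ i * Y i))
      = (∑ i, (a i)⁻¹ * (sphereMap a γ i) ^ 2) ^ (-(1 / ε) : ℝ) *
          ∑ i, (fderiv ℝ (sphereMap a) γ X) i * (fderiv ℝ (sphereMap a) γ Y) i :=
  metric_transforms_to_conformal_general a ε ha γ X Y hγ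
end
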